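/- arXiv:2007.15575 — 3 statements merged into one kernel-verified Lean document; each statement's English description precedes it below -/
import Mathlib

section
/- Let ℓ be an odd prime, let p be a prime different from ℓ, and let σ be a field automorphism of ℂ for which there exists a (necessarily unique) nonnegative integer r such that σ(ζ) = ζ^(ℓ^r) for every root of unity ζ ∈ ℂ whose order is not divisible by ℓ. Then σ(√p) = √p if and only if r is even or p is a square modulo ℓ (i.e., the image of p in ZMod ℓ is a square). -/
open Complex

private lemma sq_cases' {a b : ℂ} (h : a ^ 2 = b ^ 2) : a = b ∨ a = -b := by
  have h0 : (a - b) * (a + b) = 0 := by linear_combination h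
  rcases mul_eq_zero.mp h0 with h1 | h1
  · exact Or.inl (sub_eq_zero.mp h1)
  · exact Or.inr (eq_neg_of_add_eq_zero_left h1)

private lemma fix_helper (σ : ℂ ≃+* ℂ) {g w C : ℂ} {ε : ℤ} (hε : ε = 1 ∨ ε = -1)
    (hg : g = (ε : ℂ) * w) (hσg : σ g = C * g) : σ w = C * w := by
  have hε2 : (ε : ℂ) * (ε : ℂ) = 1 := by rcases hε with h | h <;> simp [h]
  have hw : w = (ε : ℂ) * g := by rw [hg, ← mul_assoc, hε2, one_mul]
  calc σ w = σ ((ε : ℂ) * g) := by rw [← hw]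
    _ = (ε : ℂ) * (C * g) := by rw [map_mul, map_intCast, hσg]
    _ = C * ((ε : ℂ) * g) := by ring
    _ = C * w := by rw [← hw]

private lemma cancel_I_helper (σ : ℂ ≃+* ℂ) (x : ℂ) (c C : ℤ) (hc : c * c = 1)
    (h : σ (Complex.I * x) = (C : ℂ) * (Complex.I * x))
    (hI : σ Complex.I = (c : ℂ) * Complex.I) : σ x = (c : ℂ) * (C : ℂ) * x := by
  have hc0 : (c : ℂ) ≠ 0 := by
    intro h0
    have : ((c * c : ℤ) : ℂ) = 0 := by push_cast; rw [h0]; ring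
    rw [hc] at this; norm_num at this
  have h' : (c : ℂ) * Complex.I * σ x = (C : ℂ) * (Complex.I * x) := by
    rw [← hI, ← map_mul]; exact h
  apply mul_left_cancel₀ (mul_ne_zero hc0 Complex.I_ne_zero)
  rw [h']
  have : ((c * c : ℤ) : ℂ) = 1 := by rw [hc]; norm_num
  push_cast at this
  linear_combination (-(C : ℂ) * Complex.I * x) * this

/-- For an odd prime `ℓ`, a prime `p ≠ ℓ`, and a field automorphism `σ` of `ℂ`
sending every root of unity of order not divisible by `ℓ` to its `ℓ^r`-th power,
`σ` fixes `√p` if and only if `r` is even or `p` is a square modulo `ℓ`. -/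
theorem stmt_0 (ℓ p : ℕ) (hℓ : ℓ.Prime) (hℓodd : Odd ℓ) (hp : p.Prime) (hne : p ≠ ℓ)
    (σ : ℂ ≃+* ℂ) (r : ℕ)
    (hσ : ∀ (n : ℕ) (ζ : ℂ), ¬ ℓ ∣ n → ζ ^ n = 1 → σ ζ = ζ ^ ℓ ^ r) :
    σ (Real.sqrt p) = Real.sqrt p ↔ (Even r ∨ IsSquare (p : ZMod ℓ)) := by
  haveI : Fact ℓ.Prime := ⟨hℓ⟩
  haveI : Fact p.Prime := ⟨hp⟩
  have hℓ2 : ℓ ≠ 2 := by rintro rfl; exact (by norm_num : ¬ Odd 2) hℓodd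
  have hℓdvd : ¬ ℓ ∣ p := fun h =>
    hne (((Nat.prime_dvd_prime_iff_eq hℓ hp).mp h).symm)
  have hpdvd : ¬ p ∣ ℓ := fun h =>
    hne ((Nat.prime_dvd_prime_iff_eq hp hℓ).mp h)
  have hp0 : ((p : ℤ) : ZMod ℓ) ≠ 0 := by
    rw [Int.cast_natCast]
    rw [Ne, ZMod.natCast_eq_zero_iff]
    exact hℓdvd
  have hℓ0 : ((ℓ : ℤ) : ZMod p) ≠ 0 := by
    rw [Int.cast_natCast]
    rw [Ne, ZMod.natCast_eq_zero_iff]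
    exact hpdvd
  -- the key computation
  suffices key : σ (Real.sqrt p) = ((legendreSym ℓ p ^ r : ℤ) : ℂ) * (Real.sqrt p) by
    have hsne : ((Real.sqrt p : ℝ) : ℂ) ≠ 0 := by
      rw [Complex.ofReal_ne_zero]
      exact ne_of_gt (Real.sqrt_pos.mpr (by exact_mod_cast hp.pos))
    rw [key, mul_left_eq_self₀, or_iff_left hsne]
    have hcast : ((legendreSym ℓ p ^ r : ℤ) : ℂ) = 1 ↔ legendreSym ℓ p ^ r = 1 := by
      constructor
      · intro h; exact_mod_cast h
      · intro h; rw [h]; norm_num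
    rw [hcast]
    have hsq : legendreSym ℓ p = 1 ↔ IsSquare ((p : ℕ) : ZMod ℓ) := by
      have := legendreSym.eq_one_iff ℓ hp0
      rwa [Int.cast_natCast] at this
    rcases legendreSym.eq_one_or_neg_one ℓ hp0 with h1 | h1
    · simp [h1, hsq.mp h1]
    · rw [h1, neg_one_pow_eq_one_iff_even (by norm_num : (-1 : ℤ) ≠ 1)]
      constructor
      · exact Or.inl
      · rintro (h | h)
        · exact h
        · exact absurd (hsq.mpr h) (by rw [h1]; norm_num)
  -- now prove the key computation
  rcases hp.eq_two_or_odd' with hp2 | hpodd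
  · -- p = 2
    subst hp2
    have hl8 : ¬ ℓ ∣ 8 := by
      intro h
      have h2 : ℓ ∣ 2 := hℓ.dvd_of_dvd_pow (show ℓ ∣ 2 ^ 3 by norm_num [h])
      exact hℓ2 ((Nat.prime_dvd_prime_iff_eq hℓ Nat.prime_two).mp h2)
    set m := ℓ ^ r with hm
    have hmodd : m % 2 = 1 := Nat.odd_iff.mp (hℓodd.pow)
    set w : ℝ := Real.sqrt 2 / 2 with hwdef
    set z : ℂ := (w : ℂ) + (w : ℂ) * Complex.I with hz
    have hw2 : (w : ℂ) ^ 2 = 1 / 2 := by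
      have h2 : Real.sqrt 2 ^ 2 = 2 := Real.sq_sqrt (by norm_num)
      rw [hwdef]
      push_cast
      rw [div_pow]
      rw [show ((Real.sqrt 2 : ℝ) : ℂ) ^ 2 = ((Real.sqrt 2 ^ 2 : ℝ) : ℂ) by push_cast; ring, h2]
      norm_num
    have hz2 : z ^ 2 = Complex.I := by
      rw [hz]
      linear_combination (1 + 2 * Complex.I + Complex.I ^ 2) * hw2 + (1 / 2 : ℂ) * Complex.I_sq
    have hI4 : Complex.I ^ 4 = 1 := by
      rw [show (4 : ℕ) = 2 * 2 from rfl, pow_mul, Complex.I_sq]; norm_num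
    have hz8 : z ^ 8 = 1 := by
      rw [show z ^ 8 = (z ^ 2) ^ 4 by ring, hz2, hI4]
    have h7 : z ^ 7 = -Complex.I * z := by
      rw [show z ^ 7 = (z ^ 2) ^ 3 * z by ring, hz2,
        show Complex.I ^ 3 = Complex.I ^ 2 * Complex.I by ring, Complex.I_sq]
      ring
    have hs : ((Real.sqrt 2 : ℝ) : ℂ) = z + z ^ 7 := by
      have h2w : ((Real.sqrt 2 : ℝ) : ℂ) = 2 * (w : ℂ) := by
        rw [hwdef]; push_cast; ring
      rw [h2w, h7, hz]
      linear_combination ((w : ℂ)) * Complex.I_sq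
    have e3 : z ^ 3 = Complex.I * z := by
      rw [show z ^ 3 = (z ^ 2) * z by ring, hz2]
    have e5 : z ^ 5 = -z := by
      rw [show z ^ 5 = (z ^ 2) ^ 2 * z by ring, hz2, Complex.I_sq]; ring
    have hσz : σ z = z ^ m := hσ 8 z hl8 hz8
    have hσz7 : σ (z ^ 7) = (z ^ 7) ^ m :=
      hσ 8 (z ^ 7) hl8 (by rw [← pow_mul, mul_comm, pow_mul, hz8, one_pow])
    have hred : ∀ k : ℕ, z ^ k = z ^ (k % 8) := by
      intro k
      conv_lhs => rw [← Nat.div_add_mod k 8]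
      rw [pow_add, pow_mul, hz8, one_pow, one_mul]
    have hσs : σ ((Real.sqrt 2 : ℝ) : ℂ) = z ^ (m % 8) + z ^ (7 * m % 8) := by
      rw [hs, map_add, hσz, hσz7, ← pow_mul, hred m, hred (7 * m)]
    have hcoeff : ((legendreSym ℓ 2 ^ r : ℤ) : ℂ) = ((ZMod.χ₈ m : ℤ) : ℂ) := by
      congr 1
      rw [legendreSym.at_two hℓ2, hm]
      rw [show ((ℓ ^ r : ℕ) : ZMod 8) = ((ℓ : ℕ) : ZMod 8) ^ r by push_cast; ring, map_pow]
    have hm8 : m % 8 = 1 ∨ m % 8 = 3 ∨ m % 8 = 5 ∨ m % 8 = 7 := by omega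
    rw [show ((2 : ℕ) : ℝ) = (2 : ℝ) by norm_num, show ((2 : ℕ) : ℤ) = (2 : ℤ) by norm_num]
    rw [hcoeff]
    rcases hm8 with h8 | h8 | h8 | h8
    · have h78 : 7 * m % 8 = 7 := by omega
      rw [hσs, h8, h78,
        show ((ZMod.χ₈ m : ℤ) : ℂ) = 1 by
          rw [ZMod.χ₈_nat_eq_if_mod_eight, hmodd, h8]; norm_num,
        hs, pow_one, one_mul]
    · have h78 : 7 * m % 8 = 5 := by omega
      rw [hσs, h8, h78,
        show ((ZMod.χ₈ m : ℤ) : ℂ) = -1 by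
          rw [ZMod.χ₈_nat_eq_if_mod_eight, hmodd, h8]; norm_num,
        e3, e5, hs, h7]
      ring
    · have h78 : 7 * m % 8 = 3 := by omega
      rw [hσs, h8, h78,
        show ((ZMod.χ₈ m : ℤ) : ℂ) = -1 by
          rw [ZMod.χ₈_nat_eq_if_mod_eight, hmodd, h8]; norm_num,
        e3, e5, hs, h7]
      ring
    · have h78 : 7 * m % 8 = 1 := by omega
      rw [hσs, h8, h78,
        show ((ZMod.χ₈ m : ℤ) : ℂ) = 1 by
          rw [ZMod.χ₈_nat_eq_if_mod_eight, hmodd, h8]; norm_num,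
        hs, pow_one, one_mul]
      ring
  · -- p odd
    have hp2 : p ≠ 2 := by rintro rfl; exact (by norm_num : ¬ Odd 2) hpodd
    have hpmod2 : p % 2 = 1 := Nat.odd_iff.mp hpodd
    have hl4 : ¬ ℓ ∣ 4 := by
      intro h
      have h2 : ℓ ∣ 2 := hℓ.dvd_of_dvd_pow (show ℓ ∣ 2 ^ 2 by norm_num [h])
      exact hℓ2 ((Nat.prime_dvd_prime_iff_eq hℓ Nat.prime_two).mp h2)
    have hcZ : ringChar (ZMod p) ≠ 2 := by
      rw [ZMod.ringChar_zmod_n]; exact hp2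
    haveI : NeZero p := ⟨hp.ne_zero⟩
    set ζ : ℂ := Complex.exp (2 * Real.pi * Complex.I / p) with hζdef
    have hζ : IsPrimitiveRoot ζ p := Complex.isPrimitiveRoot_exp p hp.ne_zero
    set ψ : AddChar (ZMod p) ℂ := AddChar.zmodChar p hζ.pow_eq_one with hψdef
    have hψ : ψ.IsPrimitive := AddChar.zmodChar_primitive_of_primitive_root p hζ
    set χ : MulChar (ZMod p) ℂ := (quadraticChar (ZMod p)).ringHomComp (Int.castRingHom ℂ)
      with hχdef
    have hχ₂ : χ.IsQuadratic := (quadraticChar_isQuadratic (ZMod p)).comp _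
    have hχ₁ : χ ≠ 1 :=
      (MulChar.ringHomComp_ne_one_iff (Int.cast_injective)).mpr (quadraticChar_ne_one hcZ)
    set g : ℂ := gaussSum χ ψ with hgdef
    set e1 : ℤ := legendreSym p ℓ with he1def
    have he1 : e1 = 1 ∨ e1 = -1 := legendreSym.eq_one_or_neg_one p hℓ0
    have he1sq : e1 * e1 = 1 := by rcases he1 with h | h <;> rw [h] <;> norm_num
    have hχval : χ (((ℓ ^ r : ℕ)) : ZMod p) = ((e1 ^ r : ℤ) : ℂ) := by
      rw [show ((ℓ ^ r : ℕ) : ZMod p) = ((ℓ : ℕ) : ZMod p) ^ r by push_cast; ring, map_pow]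
      have : χ ((ℓ : ℕ) : ZMod p) = ((e1 : ℤ) : ℂ) := by
        rw [hχdef, MulChar.ringHomComp_apply, he1def]
        norm_num [legendreSym]
      rw [this]
      push_cast
      ring
    have hσg : σ g = gaussSum χ (AddChar.mulShift ψ (((ℓ ^ r : ℕ)) : ZMod p)) := by
      rw [hgdef, gaussSum, map_sum, gaussSum]
      refine Finset.sum_congr rfl fun a _ => ?_
      rw [map_mul]
      congr 1
      · rw [hχdef, MulChar.ringHomComp_apply]
        exact map_intCast σ _
      · have hψp : ψ a ^ p = 1 := by
          rw [hψdef, AddChar.zmodChar_apply, ← pow_mul, mul_comm, pow_mul, hζ.pow_eq_one,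
            one_pow]
        rw [hσ p (ψ a) hℓdvd hψp, AddChar.mulShift_spec']
    have hcop : Nat.Coprime (ℓ ^ r) p :=
      Nat.Coprime.pow_left r ((Nat.coprime_primes hℓ hp).mpr (Ne.symm hne))
    have hmain := gaussSum_mulShift χ ψ (ZMod.unitOfCoprime (ℓ ^ r) hcop)
    rw [ZMod.coe_unitOfCoprime, hχval] at hmain
    have hcoeffsq : ((e1 ^ r : ℤ) : ℂ) * ((e1 ^ r : ℤ) : ℂ) = 1 := by
      have : (e1 ^ r) * (e1 ^ r) = 1 := by
        rw [← mul_pow, he1sq, one_pow]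
      exact_mod_cast this
    have hσg2 : σ g = ((e1 ^ r : ℤ) : ℂ) * g := by
      rw [hσg, hgdef]
      calc gaussSum χ (AddChar.mulShift ψ (((ℓ ^ r : ℕ)) : ZMod p))
          = ((e1 ^ r : ℤ) : ℂ) * (((e1 ^ r : ℤ) : ℂ) *
            gaussSum χ (AddChar.mulShift ψ (((ℓ ^ r : ℕ)) : ZMod p))) := by
            rw [← mul_assoc, hcoeffsq, one_mul]
        _ = ((e1 ^ r : ℤ) : ℂ) * gaussSum χ ψ := by rw [hmain]
    have hg2 : g ^ 2 = ((ZMod.χ₄ p : ℤ) : ℂ) * p := by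
      rw [hgdef, gaussSum_sq hχ₁ hχ₂ hψ, ZMod.card]
      congr 1
      rw [hχdef, MulChar.ringHomComp_apply, quadraticChar_neg_one hcZ, ZMod.card]
      rfl
    have hsp2 : ((Real.sqrt p : ℝ) : ℂ) ^ 2 = (p : ℂ) := by
      rw [show ((Real.sqrt p : ℝ) : ℂ) ^ 2 = ((Real.sqrt p ^ 2 : ℝ) : ℂ) by push_cast; ring,
        Real.sq_sqrt (by positivity)]
      norm_num
    have hp4 : p % 4 = 1 ∨ p % 4 = 3 := by omega
    rcases hp4 with hp4 | hp4
    · -- p ≡ 1 mod 4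
      have h4 : (ZMod.χ₄ p : ℤ) = 1 := ZMod.χ₄_nat_one_mod_four hp4
      have hg2' : g ^ 2 = ((Real.sqrt p : ℝ) : ℂ) ^ 2 := by
        rw [hg2, h4, hsp2]; norm_num
      have hrec : legendreSym ℓ p = e1 :=
        legendreSym.quadratic_reciprocity_one_mod_four hp4 hℓ2
      rw [hrec]
      rcases sq_cases' hg2' with h | h
      · exact fix_helper σ (Or.inl rfl) (by rw [h]; norm_num) hσg2
      · exact fix_helper σ (Or.inr rfl) (by rw [h]; push_cast; ring) hσg2
    · -- p ≡ 3 mod 4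
      have h4 : (ZMod.χ₄ p : ℤ) = -1 := ZMod.χ₄_nat_three_mod_four hp4
      have hg2' : g ^ 2 = (Complex.I * ((Real.sqrt p : ℝ) : ℂ)) ^ 2 := by
        rw [hg2, h4, mul_pow, Complex.I_sq, hsp2]; norm_num
      have hIfix : σ (Complex.I * ((Real.sqrt p : ℝ) : ℂ)) =
          ((e1 ^ r : ℤ) : ℂ) * (Complex.I * ((Real.sqrt p : ℝ) : ℂ)) := by
        rcases sq_cases' hg2' with h | h
        · exact fix_helper σ (Or.inl rfl) (by rw [h]; norm_num) hσg2
        · exact fix_helper σ (Or.inr rfl) (by rw [h]; push_cast; ring) hσg2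
      -- compute σ I
      have hI4' : Complex.I ^ 4 = 1 := by
        rw [show (4 : ℕ) = 2 * 2 from rfl, pow_mul, Complex.I_sq]; norm_num
      have hσI : σ Complex.I = Complex.I ^ (ℓ ^ r) := hσ 4 Complex.I hl4 hI4'
      set m := ℓ ^ r with hm
      have hmodd : m % 2 = 1 := Nat.odd_iff.mp (hℓodd.pow)
      have hredI : Complex.I ^ m = Complex.I ^ (m % 4) := by
        conv_lhs => rw [← Nat.div_add_mod m 4]
        rw [pow_add, pow_mul, hI4', one_pow, one_mul]
      have hm4 : m % 4 = 1 ∨ m % 4 = 3 := by omega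
      have hσI' : σ Complex.I = ((ZMod.χ₄ m : ℤ) : ℂ) * Complex.I := by
        rcases hm4 with h | h
        · rw [hσI, hredI, h, ZMod.χ₄_nat_one_mod_four h]
          norm_num
        · rw [hσI, hredI, h, ZMod.χ₄_nat_three_mod_four h,
            show Complex.I ^ 3 = Complex.I ^ 2 * Complex.I by ring, Complex.I_sq]
          push_cast
          ring
      have hχ₄sq : (ZMod.χ₄ m : ℤ) * (ZMod.χ₄ m : ℤ) = 1 := by
        rcases hm4 with h | h
        · rw [ZMod.χ₄_nat_one_mod_four h]; norm_num
        · rw [ZMod.χ₄_nat_three_mod_four h]; norm_num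
      have hfinal := cancel_I_helper σ ((Real.sqrt p : ℝ) : ℂ) (ZMod.χ₄ m) (e1 ^ r)
        hχ₄sq hIfix hσI'
      rw [hfinal]
      congr 1
      -- ((χ₄ m) : ℂ) * (e1^r : ℂ) = ((legendreSym ℓ p)^r : ℂ)
      have hχ₄pow : (ZMod.χ₄ m : ℤ) = (ZMod.χ₄ ℓ : ℤ) ^ r := by
        rw [hm, show ((ℓ ^ r : ℕ) : ZMod 4) = ((ℓ : ℕ) : ZMod 4) ^ r by push_cast; ring,
          map_pow]
      have hrec : legendreSym ℓ p = (ZMod.χ₄ ℓ : ℤ) * e1 := by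
        rw [legendreSym.quadratic_reciprocity' hp2 hℓ2, he1def]
        congr 1
        rw [pow_mul]
        have hpo : Odd (p / 2) := by
          rw [Nat.odd_iff]; omega
        rw [Odd.neg_one_pow hpo, ZMod.χ₄_eq_neg_one_pow (Nat.odd_iff.mp hℓodd)]
      rw [hrec, mul_pow, hχ₄pow]
      push_cast
      ring
end

section
/- Let p be a prime, a a positive integer, q = p^a, and let ℓ be an odd prime dividing q − 1. Then every σ ∈ ℋ_ℓ fixes √q; that is, if σ is a field automorphism of ℂ such that for some nonnegative integer r one has σ(ζ) = ζ^(ℓ^r) for every root of unity ζ ∈ ℂ of order not divisible by ℓ, then σ(√q) = √q. -/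
private lemma half_odd' (n : ℕ) : (2*n+1)/2 = n := by omega

private lemma odd_half_mul' (a b : ℕ) (ha : Odd a) (hb : Odd b) :
    ((a * b) / 2) % 2 = (a / 2 + b / 2) % 2 := by
  obtain ⟨x, rfl⟩ := ha; obtain ⟨y, rfl⟩ := hb
  have h : (2*x+1) * (2*y+1) = 2*(2*(x*y) + x + y) + 1 := by ring
  rw [h, half_odd', half_odd', half_odd']
  omega

private lemma pow_half_parity' (ℓ : ℕ) (hℓ : Odd ℓ) (r : ℕ) :
    ((ℓ ^ r) / 2) % 2 = (r * (ℓ / 2)) % 2 := by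
  induction r with
  | zero => simp
  | succ n ih =>
    rw [pow_succ, odd_half_mul' _ _ (hℓ.pow) hℓ]
    have h2 : (n+1)*(ℓ/2) = n*(ℓ/2) + ℓ/2 := by ring
    rw [h2]
    omega

private lemma I_pow_odd' (m : ℕ) (hm : Odd m) :
    Complex.I ^ m = (-1 : ℂ) ^ (m / 2) * Complex.I := by
  obtain ⟨k, rfl⟩ := hm
  rw [half_odd', pow_add, pow_mul, pow_one, Complex.I_sq]

private lemma not_dvd_of_odd_prime {ℓ : ℕ} (hℓ : ℓ.Prime) (hodd : Odd ℓ) (m : ℕ)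
    (hm : ∃ k, m = 2 ^ k) : ¬ ℓ ∣ m := by
  obtain ⟨k, rfl⟩ := hm
  intro h
  have h2 : ℓ ∣ 2 := hℓ.dvd_of_dvd_pow h
  have : ℓ = 2 := (Nat.prime_dvd_prime_iff_eq hℓ Nat.prime_two).mp h2
  subst this
  exact (by norm_num : ¬ Odd 2) hodd

private lemma sq_cases {x y : ℂ} (h : x ^ 2 = y ^ 2) : x = y ∨ x = -y := by
  have hf : (x - y) * (x + y) = 0 := by
    have : (x - y) * (x + y) = x ^ 2 - y ^ 2 := by ring
    rw [this, h, sub_self]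
  rcases mul_eq_zero.mp hf with h' | h'
  · exact Or.inl (sub_eq_zero.mp h')
  · exact Or.inr (by linear_combination h')

/-- The case `p = 2`. -/
private lemma key_two (ℓ r : ℕ) [Fact ℓ.Prime] (hℓodd : Odd ℓ) (h8 : ℓ % 8 = 1 ∨ ℓ % 8 = 7)
    (σ : ℂ ≃+* ℂ) (hσ : ∀ (n : ℕ) (ζ : ℂ), ¬ ℓ ∣ n → ζ ^ n = 1 → σ ζ = ζ ^ ℓ ^ r) :
    σ (Real.sqrt 2) = Real.sqrt 2 := by
  have hℓ : ℓ.Prime := Fact.out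
  have hζ : IsPrimitiveRoot (Complex.exp (2 * Real.pi * Complex.I / 8)) 8 :=
    Complex.isPrimitiveRoot_exp 8 (by norm_num)
  set ζ : ℂ := Complex.exp (2 * Real.pi * Complex.I / 8) with hzdef
  have hζ8 : ζ ^ 8 = 1 := hζ.pow_eq_one
  have hζ4 : ζ ^ 4 = -1 := by
    have hsq : (ζ ^ 4) ^ 2 = 1 := by rw [← pow_mul]; exact hζ8
    have hne : ζ ^ 4 ≠ 1 := hζ.pow_ne_one_of_pos_of_lt (by norm_num) (by norm_num)
    rcases sq_cases (by rw [hsq, one_pow] : (ζ ^ 4) ^ 2 = (1 : ℂ) ^ 2) with h | h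
    · exact absurd h hne
    · simpa using h
  set w : ℂ := ζ + ζ ^ 7 with hwdef
  have hw2 : w ^ 2 = 2 := by
    have h : w ^ 2 = ζ ^ 2 + 2 * ζ ^ 8 + (ζ ^ 8) * (ζ ^ 4) * (ζ ^ 2) := by rw [hwdef]; ring
    rw [h, hζ8, hζ4]; ring
  have hs2 : ((Real.sqrt 2 : ℝ) : ℂ) ^ 2 = 2 := by
    rw [← Complex.ofReal_pow, Real.sq_sqrt (by norm_num : (2:ℝ) ≥ 0)]
    norm_num
  -- σ fixes w
  have hσζ : σ ζ = ζ ^ ℓ ^ r :=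
    hσ 8 ζ (not_dvd_of_odd_prime hℓ hℓodd 8 ⟨3, by norm_num⟩) hζ8
  have he8 : ℓ ^ r % 8 = 1 ∨ ℓ ^ r % 8 = 7 := by
    rw [Nat.pow_mod]
    rcases h8 with h | h
    · rw [h]; left; simp
    · rw [h]
      rcases Nat.even_or_odd r with ⟨m, rfl⟩ | ⟨m, rfl⟩
      · left
        have : (7:ℕ) ^ (m + m) = 49 ^ m := by rw [← two_mul, pow_mul]; norm_num
        rw [this, Nat.pow_mod]; norm_num
      · right
        have : (7:ℕ) ^ (2 * m + 1) = 49 ^ m * 7 := by rw [pow_succ, pow_mul]; norm_num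
        rw [this, Nat.mul_mod, Nat.pow_mod]; norm_num
  have hσw : σ w = w := by
    have h7 : σ (ζ ^ 7) = ζ ^ (ℓ ^ r * 7) := by rw [map_pow, hσζ, ← pow_mul]
    have hmod : ∀ m : ℕ, ζ ^ m = ζ ^ (m % 8) := fun m => pow_eq_pow_mod m hζ8
    rw [hwdef, map_add, hσζ, h7, hmod (ℓ ^ r), hmod (ℓ ^ r * 7)]
    have h78 : ℓ ^ r * 7 % 8 = ℓ ^ r % 8 * 7 % 8 := by rw [Nat.mul_mod]
    rcases he8 with h | h <;> rw [h, h78, h] <;> norm_num [add_comm]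
  rcases sq_cases (hs2.trans hw2.symm) with h | h
  · rw [h, hσw]
  · rw [h, map_neg, hσw]

/-- The case of odd `p`. -/
private lemma key_odd (p ℓ r : ℕ) [Fact p.Prime] [Fact ℓ.Prime] (hp2 : p ≠ 2) (hℓ2 : ℓ ≠ 2)
    (hℓodd : Odd ℓ) (hℓp : ℓ ≠ p) (hL : legendreSym ℓ p = 1) (σ : ℂ ≃+* ℂ)
    (hσ : ∀ (n : ℕ) (ζ : ℂ), ¬ ℓ ∣ n → ζ ^ n = 1 → σ ζ = ζ ^ ℓ ^ r) :
    σ (Real.sqrt p) = Real.sqrt p := by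
  have hp : p.Prime := Fact.out
  have hℓ : ℓ.Prime := Fact.out
  have hpne : p ≠ 0 := hp.ne_zero
  haveI : NeZero p := ⟨hpne⟩
  set e : ℕ := ℓ ^ r with hedef
  have heodd : Odd e := hℓodd.pow
  have hζ : IsPrimitiveRoot (Complex.exp (2 * Real.pi * Complex.I / p)) p :=
    Complex.isPrimitiveRoot_exp p hpne
  set ζ : ℂ := Complex.exp (2 * Real.pi * Complex.I / p) with hzdef
  have hζp : ζ ^ p = 1 := hζ.pow_eq_one
  set ψ : AddChar (ZMod p) ℂ := AddChar.zmodChar p hζp with hψdef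
  have hψ : ψ.IsPrimitive := AddChar.zmodChar_primitive_of_primitive_root p hζ
  set χ : MulChar (ZMod p) ℂ := (quadraticChar (ZMod p)).ringHomComp (Int.castRingHom ℂ)
    with hχdef
  have hrc : ringChar (ZMod p) ≠ 2 := by rw [ZMod.ringChar_zmod_n]; exact hp2
  have hχ1 : χ ≠ 1 :=
    (MulChar.ringHomComp_ne_one_iff (Int.castRingHom ℂ).injective_int).mpr
      (quadraticChar_ne_one hrc)
  have hχ2 : χ.IsQuadratic := (quadraticChar_isQuadratic (ZMod p)).comp _
  set g : ℂ := gaussSum χ ψ with hgdef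
  have hg2 : g ^ 2 = χ (-1) * p := by
    rw [hgdef, gaussSum_sq hχ1 hχ2 hψ, ZMod.card]
  -- action of σ on the Gauss sum
  have hσζ : σ ζ = ζ ^ e :=
    hσ p ζ (fun h => hℓp ((Nat.prime_dvd_prime_iff_eq hℓ hp).mp h)) hζp
  have hσψ : ∀ a : ZMod p, σ (ψ a) = (ψ.mulShift ((e : ℕ) : ZMod p)) a := by
    intro a
    have h1 : σ (ψ a) = ζ ^ (e * a.val) := by
      rw [hψdef, AddChar.zmodChar_apply, map_pow, hσζ, ← pow_mul]
    rw [h1, AddChar.mulShift_apply]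
    have h2 : ((e : ℕ) : ZMod p) * a = ((e * a.val : ℕ) : ZMod p) := by
      push_cast [ZMod.natCast_val, ZMod.cast_id]
      rfl
    rw [h2, hψdef, AddChar.zmodChar_apply']
  have hσχ : ∀ x : ZMod p, σ (χ x) = χ x := fun x => by
    rw [hχdef, MulChar.ringHomComp_apply]
    exact map_intCast σ _
  have hℓne0 : ((ℓ : ℕ) : ZMod p) ≠ 0 := by
    rw [Ne, ZMod.natCast_eq_zero_iff]
    exact fun h => hℓp ((Nat.prime_dvd_prime_iff_eq hp hℓ).mp h).symm
  have hecast : ((e : ℕ) : ZMod p) = ((ℓ : ℕ) : ZMod p) ^ r := by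
    rw [hedef]; push_cast; rfl
  have hunit : IsUnit ((e : ℕ) : ZMod p) := by
    rw [hecast]
    exact isUnit_iff_ne_zero.mpr (pow_ne_zero _ hℓne0)
  set c : ℂ := χ ((e : ℕ) : ZMod p) with hcdef
  have hcne : c ≠ 0 := by
    rw [hcdef, ← hunit.unit_spec, ← MulChar.coe_toUnitHom]
    exact Units.ne_zero _
  have hc2 : c * c = 1 := by
    rcases hχ2 ((e : ℕ) : ZMod p) with h | h | h
    · exact absurd h hcne
    · rw [hcdef, h]; norm_num
    · rw [hcdef, h]; norm_num
  have hσg : σ g = c * g := by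
    have hX : σ g = gaussSum χ (ψ.mulShift ((e : ℕ) : ZMod p)) := by
      rw [hgdef, gaussSum, map_sum, gaussSum]
      exact Finset.sum_congr rfl fun a _ => by rw [map_mul, hσχ, hσψ]
    have hmul := gaussSum_mulShift χ ψ hunit.unit
    rw [hunit.unit_spec] at hmul
    rw [hX]
    calc gaussSum χ (ψ.mulShift ((e : ℕ) : ZMod p))
        = (c * c) * gaussSum χ (ψ.mulShift ((e : ℕ) : ZMod p)) := by rw [hc2, one_mul]
      _ = c * (c * gaussSum χ (ψ.mulShift ((e : ℕ) : ZMod p))) := by ring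
      _ = c * g := by rw [hcdef, hmul]
  -- identify c with a power of the Legendre symbol
  have hcL : c = ((legendreSym p ℓ : ℤ) : ℂ) ^ r := by
    rw [hcdef, hecast, map_pow]
    congr 1
    rw [legendreSym, hχdef, MulChar.ringHomComp_apply]
    norm_cast
  have hrec : legendreSym p ℓ = (-1) ^ (ℓ / 2 * (p / 2)) := by
    have := legendreSym.quadratic_reciprocity hℓ2 hp2 hℓp
    rw [hL, mul_one] at this
    exact this
  -- value of χ(-1)
  have hχm1 : χ (-1) = ((ZMod.χ₄ p : ℤ) : ℂ) := by
    rw [hχdef, MulChar.ringHomComp_apply, quadraticChar_neg_one hrc, ZMod.card]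
    rfl
  have hs2 : ((Real.sqrt p : ℝ) : ℂ) ^ 2 = (p : ℂ) := by
    rw [← Complex.ofReal_pow, Real.sq_sqrt (Nat.cast_nonneg p)]
    norm_num
  have hp4 : p % 4 = 1 ∨ p % 4 = 3 := by
    have := hp.eq_two_or_odd'
    rcases this with h | h
    · exact absurd h hp2
    · rw [Nat.odd_iff] at h; omega
  rcases hp4 with hp4 | hp4
  · -- p ≡ 1 mod 4
    have hLe : legendreSym p ℓ = 1 := by
      rw [hrec]
      have heven : Even (ℓ / 2 * (p / 2)) := by
        apply Even.mul_left
        rw [Nat.even_iff]; omega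
      exact heven.neg_one_pow
    have hc1 : c = 1 := by rw [hcL, hLe]; norm_num
    have hgp : g ^ 2 = (p : ℂ) := by
      rw [hg2, hχm1, ZMod.χ₄_nat_one_mod_four hp4]
      norm_num
    rcases sq_cases (hs2.trans hgp.symm) with h | h
    · rw [h, hσg, hc1, one_mul]
    · rw [h, map_neg, hσg, hc1, one_mul]
  · -- p ≡ 3 mod 4
    have hLe : legendreSym p ℓ = (-1) ^ (ℓ / 2) := by
      rw [hrec, pow_mul]
      have hposodd : Odd (p / 2) := by rw [Nat.odd_iff]; omega
      rcases Nat.even_or_odd (ℓ / 2) with h | h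
      · rw [h.neg_one_pow, one_pow]
      · rw [h.neg_one_pow, hposodd.neg_one_pow]
    have hcC : c = (-1 : ℂ) ^ (r * (ℓ / 2)) := by
      rw [hcL, hLe]
      push_cast
      rw [← pow_mul, mul_comm (ℓ / 2) r]
    have hσI : σ Complex.I = c * Complex.I := by
      have h4 : σ Complex.I = Complex.I ^ e :=
        hσ 4 Complex.I (not_dvd_of_odd_prime hℓ hℓodd 4 ⟨2, by norm_num⟩) Complex.I_pow_four
      rw [h4, I_pow_odd' e heodd, hcC]
      congr 1
      rw [neg_one_pow_eq_pow_mod_two, pow_half_parity' ℓ hℓodd r,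
        ← neg_one_pow_eq_pow_mod_two]
    have hgp : g ^ 2 = (Complex.I * ((Real.sqrt p : ℝ) : ℂ)) ^ 2 := by
      rw [hg2, hχm1, ZMod.χ₄_nat_three_mod_four hp4, mul_pow, Complex.I_sq, hs2]
      norm_num
    have hcIne : c * Complex.I ≠ 0 := mul_ne_zero hcne Complex.I_ne_zero
    rcases sq_cases hgp.symm with h | h
    · -- I * s = g
      have hσIs : σ (Complex.I * ((Real.sqrt p : ℝ) : ℂ)) = c * (Complex.I * ((Real.sqrt p : ℝ) : ℂ)) := by
        rw [h, hσg]
      rw [map_mul, hσI] at hσIs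
      refine mul_left_cancel₀ hcIne ?_
      calc (c * Complex.I) * σ (((Real.sqrt p : ℝ) : ℂ))
          = c * Complex.I * σ (((Real.sqrt p : ℝ) : ℂ)) := by ring
        _ = c * (Complex.I * ((Real.sqrt p : ℝ) : ℂ)) := by rw [hσIs]
        _ = (c * Complex.I) * ((Real.sqrt p : ℝ) : ℂ) := by ring
    · -- I * s = -g
      have hσIs : σ (Complex.I * ((Real.sqrt p : ℝ) : ℂ)) = c * (Complex.I * ((Real.sqrt p : ℝ) : ℂ)) := by
        rw [h, map_neg, hσg]; ring
      rw [map_mul, hσI] at hσIs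
      refine mul_left_cancel₀ hcIne ?_
      calc (c * Complex.I) * σ (((Real.sqrt p : ℝ) : ℂ))
          = c * Complex.I * σ (((Real.sqrt p : ℝ) : ℂ)) := by ring
        _ = c * (Complex.I * ((Real.sqrt p : ℝ) : ℂ)) := by rw [hσIs]
        _ = (c * Complex.I) * ((Real.sqrt p : ℝ) : ℂ) := by ring

/-- If `q = p ^ a` and `ℓ` is an odd prime dividing `q - 1`, then every field
automorphism of `ℂ` lying in `ℋ_ℓ` (i.e. raising every root of unity of order not divisible
by `ℓ` to the `ℓ^r`-th power, for some `r ≥ 0`) fixes `√q`. -/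
theorem stmt_1 (p a : ℕ) (hp : p.Prime) (ha : 0 < a) (ℓ : ℕ) (hℓ : ℓ.Prime) (hℓodd : Odd ℓ)
    (hdvd : ℓ ∣ p ^ a - 1) (σ : ℂ ≃+* ℂ)
    (hσ : ∃ r : ℕ, ∀ (n : ℕ) (ζ : ℂ), ¬ ℓ ∣ n → ζ ^ n = 1 → σ ζ = ζ ^ ℓ ^ r) :
    σ (Real.sqrt (p ^ a)) = Real.sqrt (p ^ a) := by
  obtain ⟨r, hσr⟩ := hσ
  haveI : Fact p.Prime := ⟨hp⟩
  haveI : Fact ℓ.Prime := ⟨hℓ⟩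
  have hℓ2 : ℓ ≠ 2 := by rintro rfl; exact (by norm_num : ¬ Odd 2) hℓodd
  have hpa1 : ((p : ZMod ℓ)) ^ a = 1 := by
    have h1 : 1 ≤ p ^ a := Nat.one_le_pow _ _ hp.pos
    obtain ⟨k, hk⟩ := hdvd
    have h2 : p ^ a = ℓ * k + 1 := by omega
    have : ((p : ZMod ℓ)) ^ a = ((p ^ a : ℕ) : ZMod ℓ) := by push_cast; rfl
    rw [this, h2]
    push_cast [ZMod.natCast_self]
    ring
  have hpne0 : (p : ZMod ℓ) ≠ 0 := by
    intro h
    rw [h, zero_pow (by omega : a ≠ 0)] at hpa1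
    exact zero_ne_one hpa1
  have hℓp : ℓ ≠ p := by
    rintro rfl
    exact hpne0 (ZMod.natCast_self ℓ)
  rcases Nat.even_or_odd a with ⟨k, hk⟩ | ⟨k, hk⟩
  · -- a even: √(p^a) is an integer
    have hsq : Real.sqrt ((p : ℝ) ^ a) = (p : ℝ) ^ k := by
      have h1 : ((p : ℝ) ^ a) = ((p : ℝ) ^ k) ^ 2 := by rw [hk]; ring
      rw [h1, Real.sqrt_sq (by positivity)]
    rw [hsq]
    have : (((p : ℝ) ^ k : ℝ) : ℂ) = ((p : ℂ)) ^ k := by push_cast; rfl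
    rw [this, map_pow, map_natCast]
  · -- a odd
    have hodd : Odd a := ⟨k, hk⟩
    have hQ : quadraticChar (ZMod ℓ) ((p : ZMod ℓ)) = 1 := by
      have h1 : quadraticChar (ZMod ℓ) ((p : ZMod ℓ)) ^ a = 1 := by
        rw [← map_pow, hpa1, map_one]
      rcases quadraticChar_isQuadratic (ZMod ℓ) ((p : ZMod ℓ)) with h | h | h
      · rw [h, zero_pow (by omega : a ≠ 0)] at h1; exact absurd h1 (by norm_num)
      · exact h
      · rw [h, hodd.neg_one_pow] at h1; exact absurd h1 (by norm_num)
    have hIsSq : IsSquare ((p : ZMod ℓ)) := (quadraticChar_one_iff_isSquare hpne0).mp hQ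
    have hsplit : Real.sqrt ((p : ℝ) ^ a) = (p : ℝ) ^ k * Real.sqrt (p : ℝ) := by
      have h1 : ((p : ℝ) ^ a) = ((p : ℝ) ^ k) ^ 2 * (p : ℝ) := by rw [hk]; ring
      rw [h1, Real.sqrt_mul (by positivity), Real.sqrt_sq (by positivity)]
    rw [hsplit, Complex.ofReal_mul, map_mul]
    have h2 : σ ((((p : ℝ) ^ k : ℝ)) : ℂ) = (((p : ℝ) ^ k : ℝ) : ℂ) := by
      have : (((p : ℝ) ^ k : ℝ) : ℂ) = ((p : ℂ)) ^ k := by push_cast; rfl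
      rw [this, map_pow, map_natCast]
    rw [h2]
    congr 1
    by_cases hp2 : p = 2
    · subst hp2
      have h8 : ℓ % 8 = 1 ∨ ℓ % 8 = 7 := by
        apply (ZMod.exists_sq_eq_two_iff hℓ2).mp
        exact_mod_cast hIsSq
      have := key_two ℓ r hℓodd h8 σ hσr
      exact_mod_cast this
    · have hL : legendreSym ℓ p = 1 := (legendreSym.eq_one_iff' ℓ hpne0).mpr hIsSq
      exact key_odd p ℓ r hp2 hℓ2 hℓodd hℓp hL σ hσr
end

section
/- Let V be a finite group and H a normal subgroup of V in which every element squares to the identity (so H is an elementary abelian 2-group; in particular δ^σ = δ for every irreducible character δ of H and every field automorphism σ of ℂ). For δ ∈ Irr(H), let V_δ = {x ∈ V : δ^x = δ} denote its inertia group, where δ^x(h) = δ(xhx⁻¹). Suppose there exists an extension map Λ′ with respect to H ⊴ V, i.e., a map assigning to each δ ∈ Irr(H) an irreducible character Λ′(δ) of V_δ whose restriction to H equals δ, such that Λ′(δ)^σ = Λ′(δ) for every δ ∈ Irr(H) and every field automorphism σ of ℂ (e.g., every Λ′(δ) is rational-valued). Then there exists an extension map Λ with respect to H ⊴ V that is V-equivariant,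 meaning Λ(δ^x) = Λ(δ)^x for all δ ∈ Irr(H) and x ∈ V, and that satisfies Λ(δ)^σ = Λ(δ^σ) = Λ(δ) for every δ ∈ Irr(H) and every field automorphism σ of ℂ. -/
/-- `χ : G → ℂ` is an irreducible (ordinary) character of `G`:
it is the character of some simple finite-dimensional complex representation of `G`. -/
def IsIrrChar (G : Type) [Group G] (χ : G → ℂ) : Prop :=
  ∃ V : FDRep ℂ G, CategoryTheory.Simple V ∧ χ = V.character

/-- The conjugate `δ^x` of a class function `δ` on a normal subgroup `H ⊴ V`,
given by `δ^x (h) = δ (x h x⁻¹)`. -/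
def conjChar {V : Type} [Group V] (H : Subgroup V) (hN : H.Normal) (x : V)
    (δ : ↥H → ℂ) : ↥H → ℂ :=
  fun h => δ ⟨x * (h : V) * x⁻¹, hN.conj_mem (h : V) h.2 x⟩

theorem conjChar_mul {V : Type} [Group V] (H : Subgroup V) (hN : H.Normal) (x y : V)
    (δ : ↥H → ℂ) : conjChar H hN (x * y) δ = conjChar H hN y (conjChar H hN x δ) := by
  funext h
  simp only [conjChar]
  congr 1
  ext
  simp [mul_assoc]

theorem conjChar_one {V : Type} [Group V] (H : Subgroup V) (hN : H.Normal)
    (δ : ↥H → ℂ) : conjChar H hN 1 δ = δ := by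
  funext h
  simp only [conjChar]
  congr 1
  ext
  simp

/-- The inertia group `V_δ = {x ∈ V ∣ δ^x = δ}` of a function `δ : H → ℂ` for `H ⊴ V`. -/
def inertia {V : Type} [Group V] (H : Subgroup V) (hN : H.Normal) (δ : ↥H → ℂ) :
    Subgroup V where
  carrier := {x | conjChar H hN x δ = δ}
  one_mem' := conjChar_one H hN δ
  mul_mem' := by
    intro a b ha hb
    show conjChar H hN (a * b) δ = δ
    rw [conjChar_mul, ha, hb]
  inv_mem' := by
    intro a ha
    show conjChar H hN a⁻¹ δ = δ
    have h1 : conjChar H hN (a * a⁻¹) δ = conjChar H hN a⁻¹ (conjChar H hN a δ) :=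
      conjChar_mul H hN a a⁻¹ δ
    rw [mul_inv_cancel, conjChar_one, ha] at h1
    exact h1.symm

/-!
Every irreducible character of a group of exponent `2` takes integer values (the trace of an
involution is `2 · rank(projection) - dim`), so it is fixed by every `σ`.

Fix a representative `ρ` of each `V`-orbit on `Irr(H)` and a conjugator `x` with `ρ^x = δ`, and put
`Λ(δ) = Λ'(ρ)^x`, a character of `V_δ = x⁻¹ V_ρ x`. Two conjugators differ by an element of `V_ρ`, and
`Λ'(ρ)` is a class function on `V_ρ`, so `Λ(δ)` does not depend on `x`; this gives equivariance.
Irreducibility, extension and Galois invariance are inherited from `Λ'(ρ)`.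
-/

open CategoryTheory

theorem LinearMap.exists_trace_eq_intCast_of_mul_self_eq_one {K M : Type*} [Field K]
    [AddCommGroup M] [Module K M] [FiniteDimensional K M] (h2 : (2 : K) ≠ 0)
    {f : M →ₗ[K] M} (hf : f * f = 1) : ∃ n : ℤ, trace K M f = n := by
  -- `(1 + f) / 2` is the projection onto the `1`-eigenspace of `f`
  set p : M →ₗ[K] M := (2⁻¹ : K) • (1 + f)
  have hp : IsIdempotentElem p := by
    have hsq : (1 + f) * (1 + f) = (2 : K) • (1 + f) := by
      rw [mul_add, add_mul, add_mul, hf, one_mul, one_mul, mul_one, two_smul]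
      abel
    simp only [IsIdempotentElem, p, smul_mul_smul_comm, hsq, smul_smul]
    rw [mul_assoc, inv_mul_cancel₀ h2, mul_one]
  have hf : f = (2 : K) • p - 1 := by
    simp only [p, smul_smul, mul_inv_cancel₀ h2, one_smul, add_sub_cancel_left]
  refine ⟨2 * Module.finrank K (range p) - Module.finrank K M, ?_⟩
  rw [hf, map_sub, map_smul, (LinearMap.IsIdempotentElem.isProj_range p hp).trace, trace_one]
  push_cast
  rw [smul_eq_mul]

theorem FDRep.exists_character_eq_intCast_of_mul_self_eq_one {k G : Type} [Field k] [Group G]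
    (h2 : (2 : k) ≠ 0) (W : FDRep k G) {g : G} (hg : g * g = 1) :
    ∃ n : ℤ, W.character g = n :=
  LinearMap.exists_trace_eq_intCast_of_mul_self_eq_one h2 (by rw [← map_mul, hg, map_one])

theorem IsIrrChar.comp_mulEquiv {G G' : Type} [Group G] [Group G'] (e : G ≃* G')
    {χ : G' → ℂ} (h : IsIrrChar G' χ) : IsIrrChar G (fun g => χ (e g)) := by
  obtain ⟨W, hW, rfl⟩ := h
  exact ⟨(Action.resEquiv _ e).functor.obj W, simple_obj _ W, rfl⟩

theorem IsIrrChar.apply_conj {G : Type} [Group G] {χ : G → ℂ} (h : IsIrrChar G χ) (a b : G) :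
    χ (a * b * a⁻¹) = χ b := by
  obtain ⟨W, -, rfl⟩ := h
  exact FDRep.char_conj W b a

theorem IsIrrChar.ringEquiv_comp_eq_of_mul_self_eq_one {G : Type} [Group G]
    (hG : ∀ g : G, g * g = 1) {χ : G → ℂ} (h : IsIrrChar G χ) (σ : ℂ ≃+* ℂ) :
    (fun g => σ (χ g)) = χ := by
  obtain ⟨W, -, rfl⟩ := h
  funext g
  obtain ⟨n, hn⟩ := W.exists_character_eq_intCast_of_mul_self_eq_one two_ne_zero (hG g)
  rw [hn, map_intCast]

section EquivariantExtension

variable {V : Type} [Group V] (H : Subgroup V) (hN : H.Normal)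

theorem conjChar_eq_comp_conjNormal (x : V) (δ : ↥H → ℂ) :
    conjChar H hN x δ = fun h => δ (@MulAut.conjNormal V _ H hN x h) := by
  funext h
  exact congrArg δ (Subtype.ext (MulAut.conjNormal_apply x h).symm)

theorem IsIrrChar.conjChar {δ : ↥H → ℂ} (h : IsIrrChar ↥H δ) (x : V) :
    IsIrrChar ↥H (conjChar H hN x δ) := by
  rw [conjChar_eq_comp_conjNormal]
  exact h.comp_mulEquiv _

theorem conjChar_inv_of_conjChar_eq {ρ δ : ↥H → ℂ} {x : V} (hx : conjChar H hN x ρ = δ) :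
    conjChar H hN x⁻¹ δ = ρ := by
  rw [← hx, ← conjChar_mul, mul_inv_cancel, conjChar_one]

theorem conj_mem_inertia_of_conjChar_eq {ρ δ : ↥H → ℂ} {x : V} (hx : conjChar H hN x ρ = δ)
    {y : V} (hy : y ∈ inertia H hN δ) : x * y * x⁻¹ ∈ inertia H hN ρ := by
  change conjChar H hN (x * y * x⁻¹) ρ = ρ
  rw [conjChar_mul, conjChar_mul, hx, hy, conjChar_inv_of_conjChar_eq H hN hx]

def inertiaConjEquiv {ρ δ : ↥H → ℂ} {x : V} (hx : conjChar H hN x ρ = δ) :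
    ↥(inertia H hN δ) ≃* ↥(inertia H hN ρ) where
  toFun y := ⟨x * y * x⁻¹, conj_mem_inertia_of_conjChar_eq H hN hx y.2⟩
  invFun y := ⟨x⁻¹ * y * x, by
    simpa using conj_mem_inertia_of_conjChar_eq H hN (conjChar_inv_of_conjChar_eq H hN hx) y.2⟩
  left_inv y := by ext; simp [mul_assoc]
  right_inv y := by ext; simp [mul_assoc]
  map_mul' a b := by ext; simp [mul_assoc]

def conjCharSetoid : Setoid (↥H → ℂ) where
  r ρ δ := ∃ x : V, conjChar H hN x ρ = δ
  iseqv.refl δ := ⟨1, conjChar_one H hN δ⟩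
  iseqv.symm := fun ⟨x, hx⟩ => ⟨x⁻¹, conjChar_inv_of_conjChar_eq H hN hx⟩
  iseqv.trans := fun ⟨x, hx⟩ ⟨y, hy⟩ => ⟨x * y, by rw [conjChar_mul, hx, hy]⟩

noncomputable def orbitRep (δ : ↥H → ℂ) : ↥H → ℂ :=
  (Quotient.mk (conjCharSetoid H hN) δ).out

theorem exists_conjChar_orbitRep_eq (δ : ↥H → ℂ) :
    ∃ x : V, conjChar H hN x (orbitRep H hN δ) = δ :=
  Quotient.mk_out (s := conjCharSetoid H hN) δ

noncomputable def orbitRepConj (δ : ↥H → ℂ) : V := (exists_conjChar_orbitRep_eq H hN δ).choose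

theorem conjChar_orbitRepConj (δ : ↥H → ℂ) :
    conjChar H hN (orbitRepConj H hN δ) (orbitRep H hN δ) = δ :=
  (exists_conjChar_orbitRep_eq H hN δ).choose_spec

theorem orbitRep_conjChar (x : V) (δ : ↥H → ℂ) :
    orbitRep H hN (conjChar H hN x δ) = orbitRep H hN δ :=
  congrArg Quotient.out (Quotient.sound (s := conjCharSetoid H hN) ⟨x, rfl⟩).symm

theorem IsIrrChar.orbitRep {δ : ↥H → ℂ} (h : IsIrrChar ↥H δ) :
    IsIrrChar ↥H (orbitRep H hN δ) := by
  simpa [conjChar_inv_of_conjChar_eq H hN (conjChar_orbitRepConj H hN δ)] using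
    h.conjChar H hN (orbitRepConj H hN δ)⁻¹

variable (Λ' : ∀ δ : ↥H → ℂ, ↥(inertia H hN δ) → ℂ)

noncomputable def equivariantExtension (δ : ↥H → ℂ) : ↥(inertia H hN δ) → ℂ :=
  fun y => Λ' (orbitRep H hN δ) (inertiaConjEquiv H hN (conjChar_orbitRepConj H hN δ) y)

theorem conj_apply_eq_of_conjChar_eq {ρ : ↥H → ℂ} {χ : ↥(inertia H hN ρ) → ℂ}
    (hχ : ∀ a b, χ (a * b * a⁻¹) = χ b) {u v : V}
    (huv : conjChar H hN u ρ = conjChar H hN v ρ) {y : V}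
    (hu : u * y * u⁻¹ ∈ inertia H hN ρ) (hv : v * y * v⁻¹ ∈ inertia H hN ρ) :
    χ ⟨u * y * u⁻¹, hu⟩ = χ ⟨v * y * v⁻¹, hv⟩ := by
  have hvu : v * u⁻¹ ∈ inertia H hN ρ := by
    change conjChar H hN (v * u⁻¹) ρ = ρ
    rw [conjChar_mul, ← huv, conjChar_inv_of_conjChar_eq H hN rfl]
  have : (⟨v * y * v⁻¹, hv⟩ : ↥(inertia H hN ρ))
      = ⟨v * u⁻¹, hvu⟩ * ⟨u * y * u⁻¹, hu⟩ * (⟨v * u⁻¹, hvu⟩)⁻¹ := by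
    ext; simp only [Subgroup.coe_mul, Subgroup.coe_inv]; group
  rw [this, hχ]

theorem equivariantExtension_apply_of_conjChar_eq {δ ρ : ↥H → ℂ} (hρ : orbitRep H hN δ = ρ)
    (hΛ' : ∀ a b, Λ' ρ (a * b * a⁻¹) = Λ' ρ b) {u : V} (hu : conjChar H hN u ρ = δ)
    (y : ↥(inertia H hN δ)) :
    equivariantExtension H hN Λ' δ y = Λ' ρ (inertiaConjEquiv H hN hu y) := by
  subst hρ
  exact conj_apply_eq_of_conjChar_eq H hN hΛ' (by rw [conjChar_orbitRepConj, hu]) _ _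

theorem equivariantExtension_conjChar {δ : ↥H → ℂ}
    (hΛ' : ∀ a b, Λ' (orbitRep H hN δ) (a * b * a⁻¹) = Λ' (orbitRep H hN δ) b) (x y : V)
    (hy : y ∈ inertia H hN (conjChar H hN x δ)) (hy' : x * y * x⁻¹ ∈ inertia H hN δ) :
    equivariantExtension H hN Λ' (conjChar H hN x δ) ⟨y, hy⟩
      = equivariantExtension H hN Λ' δ ⟨x * y * x⁻¹, hy'⟩ := by
  have hu : conjChar H hN (orbitRepConj H hN δ * x) (orbitRep H hN δ) = conjChar H hN x δ := by
    rw [conjChar_mul, conjChar_orbitRepConj]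
  rw [equivariantExtension_apply_of_conjChar_eq H hN Λ' (orbitRep_conjChar H hN x δ) hΛ' hu]
  exact congrArg (Λ' _) (Subtype.ext (by simp [inertiaConjEquiv, mul_assoc]))

theorem equivariantExtension_apply_of_mem {δ : ↥H → ℂ}
    (hΛ' : ∀ (h : V) (hh : h ∈ H) (hh' : h ∈ inertia H hN (orbitRep H hN δ)),
      Λ' (orbitRep H hN δ) ⟨h, hh'⟩ = orbitRep H hN δ ⟨h, hh⟩)
    (h : V) (hh : h ∈ H) (hh' : h ∈ inertia H hN δ) :
    equivariantExtension H hN Λ' δ ⟨h, hh'⟩ = δ ⟨h, hh⟩ := by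
  conv_rhs => rw [← conjChar_orbitRepConj H hN δ]
  exact hΛ' _ _ _

end EquivariantExtension

theorem stmt_7_general {V : Type} [Group V] (H : Subgroup V) (hN : H.Normal)
    (hH2 : ∀ h ∈ H, h * h = 1)
    (Λ' : ∀ δ : ↥H → ℂ, ↥(inertia H hN δ) → ℂ)
    (hΛ' : ∀ δ : ↥H → ℂ, IsIrrChar ↥H δ →
      IsIrrChar ↥(inertia H hN δ) (Λ' δ) ∧
      (∀ (h : V) (hh : h ∈ H) (hh' : h ∈ inertia H hN δ), Λ' δ ⟨h, hh'⟩ = δ ⟨h, hh⟩) ∧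
      (∀ σ : ℂ ≃+* ℂ, (fun t => σ (Λ' δ t)) = Λ' δ)) :
    ∃ Λ : ∀ δ : ↥H → ℂ, ↥(inertia H hN δ) → ℂ,
      ∀ δ : ↥H → ℂ, IsIrrChar ↥H δ →
        IsIrrChar ↥(inertia H hN δ) (Λ δ) ∧
        (∀ (h : V) (hh : h ∈ H) (hh' : h ∈ inertia H hN δ), Λ δ ⟨h, hh'⟩ = δ ⟨h, hh⟩) ∧
        (∀ (x y : V) (hy : y ∈ inertia H hN (conjChar H hN x δ))
            (hy' : x * y * x⁻¹ ∈ inertia H hN δ),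
            Λ (conjChar H hN x δ) ⟨y, hy⟩ = Λ δ ⟨x * y * x⁻¹, hy'⟩) ∧
        (∀ σ : ℂ ≃+* ℂ, (fun h => σ (δ h)) = δ ∧ (fun t => σ (Λ δ t)) = Λ δ) := by
  refine ⟨equivariantExtension H hN Λ', fun δ hδ => ?_⟩
  obtain ⟨hirr, hres, hgal⟩ := hΛ' _ (hδ.orbitRep H hN)
  refine ⟨hirr.comp_mulEquiv _, equivariantExtension_apply_of_mem H hN Λ' hres,
    equivariantExtension_conjChar H hN Λ' hirr.apply_conj, fun σ => ⟨?_, ?_⟩⟩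
  · exact hδ.ringEquiv_comp_eq_of_mul_self_eq_one (fun h => Subtype.ext (hH2 h h.2)) σ
  · exact funext fun y => congrFun (hgal σ) _

/-- Let `H ⊴ V` be finite groups with `H` elementary abelian of exponent `2`.
If there is an extension map `Λ'` with respect to `H ⊴ V` all of whose values are fixed by
every field automorphism of `ℂ`, then there is a `V`-equivariant extension map `Λ` with
respect to `H ⊴ V` satisfying `Λ(δ)^σ = Λ(δ^σ) = Λ(δ)` (here `δ^σ = δ`) for all
irreducible `δ` and all field automorphisms `σ` of `ℂ`. -/
theorem stmt_7 {V : Type} [Group V] [Finite V] (H : Subgroup V) (hN : H.Normal)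
    (hH2 : ∀ h ∈ H, h * h = 1)
    (Λ' : ∀ δ : ↥H → ℂ, ↥(inertia H hN δ) → ℂ)
    (hΛ' : ∀ δ : ↥H → ℂ, IsIrrChar ↥H δ →
      IsIrrChar ↥(inertia H hN δ) (Λ' δ) ∧
      (∀ (h : V) (hh : h ∈ H) (hh' : h ∈ inertia H hN δ), Λ' δ ⟨h, hh'⟩ = δ ⟨h, hh⟩) ∧
      (∀ σ : ℂ ≃+* ℂ, (fun t => σ (Λ' δ t)) = Λ' δ)) :
    ∃ Λ : ∀ δ : ↥H → ℂ, ↥(inertia H hN δ) → ℂ,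
      ∀ δ : ↥H → ℂ, IsIrrChar ↥H δ →
        IsIrrChar ↥(inertia H hN δ) (Λ δ) ∧
        (∀ (h : V) (hh : h ∈ H) (hh' : h ∈ inertia H hN δ), Λ δ ⟨h, hh'⟩ = δ ⟨h, hh⟩) ∧
        (∀ (x y : V) (hy : y ∈ inertia H hN (conjChar H hN x δ))
            (hy' : x * y * x⁻¹ ∈ inertia H hN δ),
            Λ (conjChar H hN x δ) ⟨y, hy⟩ = Λ δ ⟨x * y * x⁻¹, hy'⟩) ∧
        (∀ σ : ℂ ≃+* ℂ, (fun h => σ (δ h)) = δ ∧ (fun t => σ (Λ δ t)) = Λ δ) :=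
  stmt_7_general H hN hH2 Λ' hΛ'
end
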